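/- Set S₁ = {(6−√3)/3, (6+√3)/3}, S₂ = {z ∈ ℂ : z³ − 6z² + 11z − 6 = 0} = {1, 2, 3} and S₃ = {∞}. Then for every nonconstant meromorphic function h on ℂ, the functions f = h + 4 and g = −h satisfy E_f(S_j, ∞) = E_g(S_j, ∞) for j = 1, 2, 3 (in particular E_f(S₁, 0) = E_g(S₁, 0), E_f(S₂, 3) = E_g(S₂, 3), E_f(S₃, 1) = E_g(S₃, 1)), yet f ≢ g. Hence the set S₂ in the three-set uniqueness theorem cannot be replaced by an arbitrary set of three elements. -/

import Mathlib

open Complex Filter MeasureTheory Metric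
open scoped Classical

/-- The order of a function at a point, as an integer (`0` if not meromorphic or of
order `⊤`, i.e. identically zero near the point). -/
noncomputable def mOrd (f : ℂ → ℂ) (z : ℂ) : ℤ :=
  if h : MeromorphicAt f z then ((meromorphicOrderAt f z).untopD 0) else 0

/-- Multiplicity of `z` as an `α`-point of `f`. -/
noncomputable def zMult (f : ℂ → ℂ) (α z : ℂ) : ℕ :=
  (mOrd (fun w => f w - α) z).toNat

/-- Multiplicity of `z` as a pole of `f`. -/
noncomputable def pMult (f : ℂ → ℂ) (z : ℂ) : ℕ :=
  (-(mOrd f z)).toNat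

/-- Pointwise contribution of `z` to the multiset `E_f(S, k)`:
an `α`-point (`α ∈ S`) of multiplicity `m` counts `m` times if `m ≤ k`, else `k+1` times. -/
noncomputable def Ecount (f : ℂ → ℂ) (S : Set ℂ) (k : ℕ) (z : ℂ) : ℕ :=
  ∑ᶠ α ∈ S, min (zMult f α z) (k + 1)

/-- `f` and `g` share the set `S ⊆ ℂ` with weight `k`, i.e. `E_f(S,k) = E_g(S,k)`. -/
def EshareEq (f g : ℂ → ℂ) (S : Set ℂ) (k : ℕ) : Prop :=
  ∀ z : ℂ, Ecount f S k z = Ecount g S k z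

/-- `f` and `g` share the set `S ⊆ ℂ` counting multiplicities (weight `∞`). -/
def EshareEqCM (f g : ℂ → ℂ) (S : Set ℂ) : Prop :=
  ∀ z : ℂ, (∑ᶠ α ∈ S, zMult f α z) = ∑ᶠ α ∈ S, zMult g α z

/-- `f` and `g` share `{∞}` with weight `k`. -/
def EpoleEq (f g : ℂ → ℂ) (k : ℕ) : Prop :=
  ∀ z : ℂ, min (pMult f z) (k + 1) = min (pMult g z) (k + 1)

/-- `f` and `g` share `{∞}` counting multiplicities. -/
def EpoleEqCM (f g : ℂ → ℂ) : Prop :=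
  ∀ z : ℂ, pMult f z = pMult g z

/-- Equality of meromorphic functions: `f ≡ g`, i.e. `f = g` off a countable set. -/
def MEq (f g : ℂ → ℂ) : Prop :=
  ∃ D : Set ℂ, D.Countable ∧ ∀ z ∉ D, f z = g z

/-- `f` is a nonconstant meromorphic function in the plane. -/
def MNonconst (f : ℂ → ℂ) : Prop :=
  MeromorphicOn f Set.univ ∧ ¬ ∃ c : ℂ, MEq f (fun _ => c)

/-- The unintegrated counting function of a pointwise (multiplicity) count `w`:
number of points in the closed disc of radius `t`, counted with `w`. -/
noncomputable def ncount (w : ℂ → ℕ) (t : ℝ) : ℕ :=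
  ∑ᶠ z ∈ closedBall (0 : ℂ) t, w z

/-- The integrated counting function associated to an unintegrated one. -/
noncomputable def integN (nf : ℝ → ℕ) (r : ℝ) : ℝ :=
  (∫ t in (0:ℝ)..r, ((nf t : ℝ) - (nf 0 : ℝ)) / t) + (nf 0 : ℝ) * Real.log r

/-- The Nevanlinna integrated counting function `N(r, f)` of the poles of `f`. -/
noncomputable def NN (f : ℂ → ℂ) (r : ℝ) : ℝ :=
  integN (ncount (pMult f)) r

/-- The Nevanlinna proximity function `m(r, f)`. -/
noncomputable def mprox (f : ℂ → ℂ) (r : ℝ) : ℝ :=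
  (2 * Real.pi)⁻¹ *
    ∫ θ in (0:ℝ)..(2 * Real.pi), Real.log (max ‖f (r * Complex.exp (θ * Complex.I))‖ 1)

/-- The Nevanlinna characteristic `T(r, f)`. -/
noncomputable def Tchar (f : ℂ → ℂ) (r : ℝ) : ℝ :=
  mprox f r + NN f r

/-- `u` is a quantity of type `S(r, h)` : `u r = o(T(r, h))` as `r → ∞`, outside a
possible exceptional set of finite linear measure. -/
def SmallWrt (h : ℂ → ℂ) (u : ℝ → ℝ) : Prop :=
  ∃ E : Set ℝ, volume E < ⊤ ∧
    Tendsto (fun r => u r / Tchar h r) (atTop ⊓ Filter.principal Eᶜ) (nhds 0)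

/-!
The `α`-points of `h + c` are the `(α - c)`-points of `h`, which are the `(c - α)`-points of `-h`,
and adding a constant or changing the sign does not move poles or change their orders. So
`h + c` and `-h` share every set that is symmetric about `c / 2`, with all multiplicities. For
`c = 4` both `S₁` and `S₂` are symmetric about `2`, while `h + 4 ≡ -h` would force `h ≡ -2`.
-/

lemma mOrd_eq_untopD (F : ℂ → ℂ) (z : ℂ) : mOrd F z = (meromorphicOrderAt F z).untopD 0 := by
  unfold mOrd
  split_ifs with hF
  · rfl
  · simp [meromorphicOrderAt_of_not_meromorphicAt hF]

lemma mOrd_neg (F : ℂ → ℂ) (z : ℂ) : mOrd (fun w => -F w) z = mOrd F z := by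
  rw [mOrd_eq_untopD, mOrd_eq_untopD, ← meromorphicOrderAt_fun_neg]

lemma zMult_add_const (F : ℂ → ℂ) (c α z : ℂ) :
    zMult (fun w => F w + c) α z = zMult F (α - c) z := by
  unfold zMult
  congr 2
  funext w
  ring

lemma zMult_neg (F : ℂ → ℂ) (α z : ℂ) : zMult (fun w => -F w) α z = zMult F (-α) z := by
  rw [zMult, zMult, ← mOrd_neg]
  congr 2
  funext w
  ring

lemma zMult_add_const_eq_zMult_neg (F : ℂ → ℂ) (c α z : ℂ) :
    zMult (fun w => F w + c) α z = zMult (fun w => -F w) (c - α) z := by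
  rw [zMult_add_const, zMult_neg, neg_sub]

lemma pMult_eq_zero_of_meromorphicOrderAt_nonneg {F : ℂ → ℂ} {z : ℂ} (h : 0 ≤ meromorphicOrderAt F z) :
    pMult F z = 0 := by
  rw [pMult, mOrd_eq_untopD]
  cases hF : meromorphicOrderAt F z with
  | top => simp
  | coe n =>
    rw [hF] at h
    simp only [WithTop.untopD_coe, Int.toNat_eq_zero, Left.neg_nonpos_iff]
    exact_mod_cast h

lemma pMult_add_of_analyticAt {F G : ℂ → ℂ} {z : ℂ} (hG : AnalyticAt ℂ G z) :
    pMult (fun w => F w + G w) z = pMult F z := by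
  have hG₀ := hG.meromorphicOrderAt_nonneg
  rcases lt_or_ge (meromorphicOrderAt F z) 0 with hneg | hnonneg
  · have hord : meromorphicOrderAt (fun w => F w + G w) z = meromorphicOrderAt F z :=
      meromorphicOrderAt_add_eq_left_of_lt hG.meromorphicAt (hneg.trans_le hG₀)
    rw [pMult, pMult, mOrd_eq_untopD, mOrd_eq_untopD, hord]
  · rw [pMult_eq_zero_of_meromorphicOrderAt_nonneg hnonneg, pMult_eq_zero_of_meromorphicOrderAt_nonneg]
    by_cases hF : MeromorphicAt F z
    · exact (le_min hnonneg hG₀).trans (meromorphicOrderAt_add hF hG.meromorphicAt)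
    · have hFG : ¬ MeromorphicAt (fun w => F w + G w) z := fun hFG =>
        hF (by simpa using hFG.fun_sub hG.meromorphicAt)
      rw [meromorphicOrderAt_of_not_meromorphicAt hFG]

lemma pMult_neg (F : ℂ → ℂ) (z : ℂ) : pMult (fun w => -F w) z = pMult F z := by
  rw [pMult, pMult, mOrd_neg]

lemma finsum_mem_comp_const_sub {M : Type*} [AddCommMonoid M] {S : Set ℂ} {c : ℂ}
    (hS : ∀ α ∈ S, c - α ∈ S) (φ : ℂ → M) : ∑ᶠ α ∈ S, φ (c - α) = ∑ᶠ α ∈ S, φ α := by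
  have hinv : Set.InvOn (c - ·) (c - ·) S S :=
    ⟨fun α _ => sub_sub_cancel c α, fun α _ => sub_sub_cancel c α⟩
  exact finsum_mem_eq_of_bijOn (c - ·) (hinv.bijOn hS hS) fun α _ => rfl

section SharingUnderReflection

variable (F : ℂ → ℂ) (c : ℂ) {S : Set ℂ}

lemma finsum_mem_zMult_add_const_eq_neg (hS : ∀ α ∈ S, c - α ∈ S) (φ : ℕ → ℕ) (z : ℂ) :
    ∑ᶠ α ∈ S, φ (zMult (fun w => F w + c) α z) = ∑ᶠ α ∈ S, φ (zMult (fun w => -F w) α z) := by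
  simp only [zMult_add_const_eq_zMult_neg F c]
  exact finsum_mem_comp_const_sub hS fun β => φ (zMult (fun w => -F w) β z)

lemma eshareEqCM_add_const_neg (hS : ∀ α ∈ S, c - α ∈ S) :
    EshareEqCM (fun z => F z + c) (fun z => -F z) S :=
  finsum_mem_zMult_add_const_eq_neg F c hS id

lemma eshareEq_add_const_neg (hS : ∀ α ∈ S, c - α ∈ S) (k : ℕ) :
    EshareEq (fun z => F z + c) (fun z => -F z) S k :=
  finsum_mem_zMult_add_const_eq_neg F c hS (min · (k + 1))

lemma epoleEqCM_add_const_neg : EpoleEqCM (fun z => F z + c) (fun z => -F z) := fun z => by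
  rw [pMult_add_of_analyticAt analyticAt_const, pMult_neg]

end SharingUnderReflection

lemma not_mEq_add_const_neg {F : ℂ → ℂ} (c : ℂ) (hF : ¬ ∃ b : ℂ, MEq F fun _ => b) :
    ¬ MEq (fun z => F z + c) (fun z => -F z) := by
  rintro ⟨D, hD, hFD⟩
  exact hF ⟨-c / 2, D, hD, fun z hz => by linear_combination hFD z hz / 2⟩

lemma EpoleEqCM.epoleEq {f g : ℂ → ℂ} (h : EpoleEqCM f g) (k : ℕ) : EpoleEq f g k :=
  fun z => by rw [h z]

lemma setOf_cubic_eq_zero :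
    {z : ℂ | z ^ 3 - 6 * z ^ 2 + 11 * z - 6 = 0} = {1, 2, 3} := by
  ext z
  have hfactor : z ^ 3 - 6 * z ^ 2 + 11 * z - 6 = (z - 1) * ((z - 2) * (z - 3)) := by ring
  rw [Set.mem_ofPred_eq, hfactor]
  simp only [Set.mem_insert_iff, Set.mem_singleton_iff, mul_eq_zero, sub_eq_zero]

/-- **Example 1.4.** The set `S₂` cannot be arbitrary: with
`S₁ = {(6-√3)/3, (6+√3)/3}`, `S₂ = {z : z³ - 6z² + 11z - 6 = 0} = {1, 2, 3}`,
`S₃ = {∞}`, the functions `f = h + 4` and `g = -h` share each `Sⱼ` counting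
multiplicities (hence with weights `(0, 3, 1)`) for every nonconstant meromorphic `h`,
yet `f ≢ g`. -/
theorem example_arbitrary_set_fails_123 :
    ({z : ℂ | z ^ 3 - 6 * z ^ 2 + 11 * z - 6 = 0} = {1, 2, 3}) ∧
      ∀ h : ℂ → ℂ, MNonconst h →
        EshareEqCM (fun z => h z + 4) (fun z => -h z)
          {(6 - (Real.sqrt 3 : ℂ)) / 3, (6 + (Real.sqrt 3 : ℂ)) / 3} ∧
        EshareEqCM (fun z => h z + 4) (fun z => -h z)
          {z : ℂ | z ^ 3 - 6 * z ^ 2 + 11 * z - 6 = 0} ∧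
        EpoleEqCM (fun z => h z + 4) (fun z => -h z) ∧
        EshareEq (fun z => h z + 4) (fun z => -h z)
          {(6 - (Real.sqrt 3 : ℂ)) / 3, (6 + (Real.sqrt 3 : ℂ)) / 3} 0 ∧
        EshareEq (fun z => h z + 4) (fun z => -h z)
          {z : ℂ | z ^ 3 - 6 * z ^ 2 + 11 * z - 6 = 0} 3 ∧
        EpoleEq (fun z => h z + 4) (fun z => -h z) 1 ∧
        ¬ MEq (fun z => h z + 4) (fun z => -h z) := by
  have hS₁ : ∀ α ∈ ({(6 - (Real.sqrt 3 : ℂ)) / 3, (6 + (Real.sqrt 3 : ℂ)) / 3} : Set ℂ),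
      4 - α ∈ ({(6 - (Real.sqrt 3 : ℂ)) / 3, (6 + (Real.sqrt 3 : ℂ)) / 3} : Set ℂ) := by
    rintro α (rfl | rfl)
    · exact Or.inr (Set.mem_singleton_iff.mpr (by ring))
    · exact Or.inl (by ring)
  have hS₂ : ∀ α ∈ {z : ℂ | z ^ 3 - 6 * z ^ 2 + 11 * z - 6 = 0},
      4 - α ∈ {z : ℂ | z ^ 3 - 6 * z ^ 2 + 11 * z - 6 = 0} := fun α hα => by
    simp only [Set.mem_ofPred_eq] at hα ⊢
    linear_combination -hα
  refine ⟨setOf_cubic_eq_zero, fun h hh => ⟨eshareEqCM_add_const_neg h 4 hS₁,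
    eshareEqCM_add_const_neg h 4 hS₂, epoleEqCM_add_const_neg h 4,
    eshareEq_add_const_neg h 4 hS₁ 0, eshareEq_add_const_neg h 4 hS₂ 3,
    (epoleEqCM_add_const_neg h 4).epoleEq 1, not_mEq_add_const_neg 4 hh.2⟩⟩
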